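/- Let Ω ⊂ ℝ² be a domain contained in the union R of two perpendicular closed strips S₁ = ℝ × [0,d] and S₂ = [0,d] × ℝ, and let u be continuous on closure(Ω), subharmonic (Δu ≥ 0 in the classical sense, u ∈ C²) in Ω, with u ≤ 0 on ∂Ω and u bounded above. Then u ≤ 0 in Ω. -/

import Mathlib

open Real

/-- Second directional derivative of `f` at `x` in directions `v`, `w`. -/
noncomputable def secondDeriv (f : EuclideanSpace ℝ (Fin 2) → ℝ)
    (x v w : EuclideanSpace ℝ (Fin 2)) : ℝ :=
  fderiv ℝ (fun y => fderiv ℝ f y v) x w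

/-!
A Phragmén–Lindelöf argument. The function
`h(y) = cosh (k y₁) cos (k y₀ - π/4) + cosh (k y₀) cos (k y₁ - π/4) + cosh (π/2)`, `k = π/(2d)`,
is the real part of an entire function, hence harmonic; on the cross it is nonnegative and grows
at least linearly in `‖y‖`. For `ε > 0` the subharmonic function `u - ε h` is then negative far
out in `Ω` and nonpositive on `∂Ω`, so the weak maximum principle on the bounded pieces
`Ω ∩ ball 0 R` gives `u ≤ ε h` in `Ω`; let `ε → 0`. The weak maximum principle itself follows
from the second-derivative test applied to `u + η ‖y‖²`, whose Laplacian is positive.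
-/

open Filter Topology InnerProductSpace Laplacian Bornology

local notation "ℝ²" => EuclideanSpace ℝ (Fin 2)

theorem nonpos_of_forall_pos_le_mul {a c : ℝ} (h : ∀ ε > 0, a ≤ ε * c) : a ≤ 0 := by
  have hlim : Tendsto (fun ε : ℝ => ε * c) (𝓝 0) (𝓝 (0 * c)) := tendsto_id.mul_const c
  rw [zero_mul] at hlim
  exact ge_of_tendsto (hlim.mono_left (nhdsWithin_le_nhds (s := Set.Ioi 0)))
    (eventually_nhdsWithin_of_forall fun ε hε => h ε hε)

theorem IsLocalMax.deriv_deriv_nonpos {φ : ℝ → ℝ} {t : ℝ} (hmax : IsLocalMax φ t)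
    (hφ : ContinuousAt φ t) : deriv (deriv φ) t ≤ 0 := by
  by_contra! hpos
  have hmin := isLocalMin_of_deriv_deriv_pos hpos hmax.deriv_eq_zero hφ
  have hconst : φ =ᶠ[𝓝 t] fun _ => φ t := by
    filter_upwards [hmin, hmax] with s hs₁ hs₂ using le_antisymm hs₂ hs₁
  have hderiv : deriv φ =ᶠ[𝓝 t] fun _ => 0 := by
    simpa using hconst.deriv
  simp [hderiv.deriv_eq] at hpos

theorem IsLocalMax.iteratedFDeriv_two_nonpos {E : Type*} [NormedAddCommGroup E]
    [NormedSpace ℝ E] {f : E → ℝ} {x : E} (hmax : IsLocalMax f x) (hf : ContDiffAt ℝ 2 f x)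
    (v : E) : iteratedFDeriv ℝ 2 f x ![v, v] ≤ 0 := by
  let γ : ℝ → E := fun t => x + t • v
  have hγ : ∀ t, HasDerivAt γ v t := fun t =>
    (((hasDerivAt_id t).smul_const v).const_add x).congr_deriv (one_smul ℝ v)
  have hγ0 : x = γ 0 := by simp [γ]
  have hγt : Tendsto γ (𝓝 0) (𝓝 x) := hγ0 ▸ (hγ 0).continuousAt.tendsto
  have hdiff : ∀ᶠ y in 𝓝 x, DifferentiableAt ℝ f y :=
    (hf.eventually (by simp)).mono fun y hy => hy.differentiableAt (by norm_num)
  have hfd : DifferentiableAt ℝ (fderiv ℝ f) x :=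
    (hf.fderiv_right (m := 1) (by norm_num)).differentiableAt (by norm_num)
  have hderiv : deriv (f ∘ γ) =ᶠ[𝓝 0] fun t => fderiv ℝ f (γ t) v := by
    filter_upwards [hγt.eventually hdiff] with t ht
    exact (ht.hasFDerivAt.comp_hasDerivAt t (hγ t)).deriv
  have hsecond : deriv (deriv (f ∘ γ)) 0 = iteratedFDeriv ℝ 2 f x ![v, v] := by
    rw [hderiv.deriv_eq, iteratedFDeriv_two_apply]
    exact ((ContinuousLinearMap.apply ℝ ℝ v).hasFDerivAt.comp x
      hfd.hasFDerivAt).comp_hasDerivAt_of_eq 0 (hγ 0) hγ0 |>.deriv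
  have hmaxγ : IsLocalMax f (γ 0) := by rwa [← hγ0]
  rw [← hsecond]
  exact (hmaxγ.comp_continuous (hγ 0).continuousAt).deriv_deriv_nonpos
    (hf.continuousAt.comp_of_eq (hγ 0).continuousAt hγ0.symm)

section

variable {E : Type*} [NormedAddCommGroup E] [InnerProductSpace ℝ E] [FiniteDimensional ℝ E]

theorem IsLocalMax.laplacian_nonpos {f : E → ℝ} {x : E} (hmax : IsLocalMax f x)
    (hf : ContDiffAt ℝ 2 f x) : Δ f x ≤ 0 := by
  rw [laplacian_eq_iteratedFDeriv_stdOrthonormalBasis]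
  exact Finset.sum_nonpos fun i _ => hmax.iteratedFDeriv_two_nonpos hf _

namespace InnerProductSpace

theorem laplacian_norm_sq (x : E) : Δ (fun y : E => ‖y‖ ^ 2) x = 2 * Module.finrank ℝ E := by
  have hfd : fderiv ℝ (fun y : E => ‖y‖ ^ 2) = ⇑(2 • innerSL ℝ : E →L[ℝ] E →L[ℝ] ℝ) := by
    ext1 y
    exact (hasStrictFDerivAt_norm_sq y).hasFDerivAt.fderiv
  have hb : ∀ i, innerSL ℝ (stdOrthonormalBasis ℝ E i) (stdOrthonormalBasis ℝ E i) = 1 :=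
    fun i => by
      rw [innerSL_apply_apply, real_inner_self_eq_norm_sq,
        (stdOrthonormalBasis ℝ E).orthonormal.1 i, one_pow]
  rw [laplacian_eq_iteratedFDeriv_stdOrthonormalBasis]
  simp only [iteratedFDeriv_two_apply, hfd, ContinuousLinearMap.fderiv]
  simp [hb, mul_comm]

theorem laplacian_comp_linearIsometryEquiv {F G : Type*} [NormedAddCommGroup F]
    [InnerProductSpace ℝ F] [FiniteDimensional ℝ F] [NormedAddCommGroup G] [NormedSpace ℝ G]
    (L : E ≃ₗᵢ[ℝ] F) (f : F → G) (x : E) : Δ (f ∘ L) x = Δ f (L x) := by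
  have h := L.toContinuousLinearEquiv.iteratedFDerivWithin_comp_right f uniqueDiffOn_univ
    (Set.mem_univ (L x)) 2
  simp only [Set.preimage_univ, iteratedFDerivWithin_univ] at h
  rw [laplacian_eq_iteratedFDeriv_stdOrthonormalBasis,
    laplacian_eq_iteratedFDeriv_orthonormalBasis f ((stdOrthonormalBasis ℝ E).map L)]
  refine Finset.sum_congr rfl fun i _ => ?_
  rw [show f ∘ L = f ∘ L.toContinuousLinearEquiv from rfl, h]
  simp only [ContinuousMultilinearMap.compContinuousLinearMap_apply, OrthonormalBasis.map_apply]
  congr 1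
  ext j
  fin_cases j <;> rfl

theorem HarmonicAt.comp_linearIsometryEquiv {F G : Type*} [NormedAddCommGroup F]
    [InnerProductSpace ℝ F] [FiniteDimensional ℝ F] [NormedAddCommGroup G] [NormedSpace ℝ G]
    {f : F → G} (L : E ≃ₗᵢ[ℝ] F) {x : E} (hf : HarmonicAt f (L x)) :
    HarmonicAt (f ∘ L) x := by
  refine ⟨hf.1.comp x L.contDiff.contDiffAt, ?_⟩
  filter_upwards [(L.continuous.tendsto x).eventually hf.2] with y hy
  rw [Pi.zero_apply, laplacian_comp_linearIsometryEquiv]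
  exact hy

end InnerProductSpace

theorem exists_mem_frontier_le_of_laplacian_pos {D : Set E} {g : E → ℝ} (hD : IsOpen D)
    (hDb : IsBounded D) (hgc : ContinuousOn g (closure D)) (hg : ContDiffOn ℝ 2 g D)
    (hΔ : ∀ x ∈ D, 0 < Δ g x) {x : E} (hx : x ∈ D) : ∃ z ∈ frontier D, g x ≤ g z := by
  obtain ⟨z, hz, hmax⟩ := hDb.isCompact_closure.exists_isMaxOn ⟨x, subset_closure hx⟩ hgc
  refine ⟨z, ?_, hmax (subset_closure hx)⟩
  rw [hD.frontier_eq]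
  refine ⟨hz, fun hzD => ?_⟩
  have hloc : IsLocalMax g z :=
    Filter.mem_of_superset (hD.mem_nhds hzD) fun y hy => hmax (subset_closure hy)
  exact (hΔ z hzD).not_ge (hloc.laplacian_nonpos (hg.contDiffAt (hD.mem_nhds hzD)))

theorem nonpos_of_laplacian_nonneg [Nontrivial E] {D : Set E} {g : E → ℝ} (hD : IsOpen D)
    (hDb : IsBounded D) (hgc : ContinuousOn g (closure D)) (hg : ContDiffOn ℝ 2 g D)
    (hΔ : ∀ x ∈ D, 0 ≤ Δ g x) (hfr : ∀ x ∈ frontier D, g x ≤ 0) {x : E} (hx : x ∈ D) :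
    g x ≤ 0 := by
  obtain ⟨R, hR⟩ := hDb.subset_closedBall 0
  refine nonpos_of_forall_pos_le_mul (c := R ^ 2) fun η hη => ?_
  have hq : ContDiff ℝ 2 (η • fun y : E => ‖y‖ ^ 2) := (contDiff_norm_sq ℝ).const_smul η
  have hΔη : ∀ y ∈ D, 0 < Δ (g + η • fun y : E => ‖y‖ ^ 2) y := fun y hy => by
    rw [(hg.contDiffAt (hD.mem_nhds hy)).laplacian_add hq.contDiffAt,
      laplacian_smul η (contDiff_norm_sq ℝ).contDiffAt, laplacian_norm_sq, smul_eq_mul]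
    have := Module.finrank_pos (R := ℝ) (M := E)
    have := hΔ y hy
    positivity
  obtain ⟨z, hz, hxz⟩ := exists_mem_frontier_le_of_laplacian_pos hD hDb
    (hgc.add hq.continuous.continuousOn) (hg.add hq.contDiffOn) hΔη hx
  have hzR : ‖z‖ ≤ R := by
    simpa using (closure_minimal hR Metric.isClosed_closedBall) (frontier_subset_closure hz)
  simp only [Pi.add_apply, Pi.smul_apply, smul_eq_mul] at hxz
  have : η * ‖z‖ ^ 2 ≤ η * R ^ 2 := by gcongr
  nlinarith [hfr z hz, mul_nonneg hη.le (sq_nonneg ‖x‖)]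

theorem nonpos_of_laplacian_nonneg_of_barrier [Nontrivial E] {Ω : Set E} {u h : E → ℝ}
    (hΩ : IsOpen Ω) (huc : ContinuousOn u (closure Ω)) (hu : ContDiffOn ℝ 2 u Ω)
    (hΔu : ∀ x ∈ Ω, 0 ≤ Δ u x) (hu_fr : ∀ x ∈ frontier Ω, u x ≤ 0) (hub : BddAbove (u '' Ω))
    (hh : ContDiff ℝ 2 h) (hΔh : ∀ x ∈ Ω, Δ h x ≤ 0) (hh_fr : ∀ x ∈ frontier Ω, 0 ≤ h x)
    (hh_top : Tendsto h (cobounded E ⊓ 𝓟 Ω) atTop) {x : E} (hx : x ∈ Ω) : u x ≤ 0 := by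
  obtain ⟨M, hM⟩ := hub
  refine nonpos_of_forall_pos_le_mul (c := h x) fun ε hε => ?_
  obtain ⟨R, hxR, hR⟩ : ∃ R, ‖x‖ < R ∧ ∀ y ∈ Ω, R ≤ ‖y‖ → M < ε * h y := by
    obtain ⟨r, -, hr⟩ := (hasBasis_cobounded_norm.inf_principal Ω).eventually_iff.1
      (hh_top.eventually_gt_atTop (M / ε))
    refine ⟨max r (‖x‖ + 1), by simp, fun y hy hRy => ?_⟩
    exact (div_lt_iff₀' hε).1 (hr ⟨(le_max_left _ _).trans hRy, hy⟩)
  have hεh : ContDiff ℝ 2 (ε • h) := hh.const_smul ε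
  have hD : IsOpen (Ω ∩ Metric.ball 0 R) := hΩ.inter Metric.isOpen_ball
  have hclosure : closure (Ω ∩ Metric.ball 0 R) ⊆ closure Ω :=
    closure_mono Set.inter_subset_left
  have hfr : ∀ z ∈ frontier (Ω ∩ Metric.ball 0 R), (u - ε • h) z ≤ 0 := by
    intro z hz
    rw [hD.frontier_eq] at hz
    simp only [Pi.sub_apply, Pi.smul_apply, smul_eq_mul, sub_nonpos]
    by_cases hzΩ : z ∈ Ω
    · have hRz : R ≤ ‖z‖ := by simpa [hzΩ] using hz.2
      exact (hM ⟨z, hzΩ, rfl⟩).trans (hR z hzΩ hRz).le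
    · have hz_fr : z ∈ frontier Ω := by
        rw [hΩ.frontier_eq]
        exact ⟨hclosure hz.1, hzΩ⟩
      exact (hu_fr z hz_fr).trans (mul_nonneg hε.le (hh_fr z hz_fr))
  have hΔ : ∀ y ∈ Ω ∩ Metric.ball 0 R, 0 ≤ Δ (u - ε • h) y := fun y hy => by
    rw [(hu.contDiffAt (hΩ.mem_nhds hy.1)).laplacian_sub hεh.contDiffAt,
      laplacian_smul ε hh.contDiffAt, smul_eq_mul]
    nlinarith [hΔu y hy.1, hΔh y hy.1]
  have := nonpos_of_laplacian_nonneg hD (Metric.isBounded_ball.subset Set.inter_subset_right)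
    ((huc.sub hεh.continuous.continuousOn).mono hclosure)
    ((hu.sub hεh.contDiffOn).mono Set.inter_subset_left) hΔ hfr
    ⟨hx, mem_ball_zero_iff.2 hxR⟩
  simpa [sub_nonpos] using this

end

theorem secondDeriv_eq_iteratedFDeriv {f : ℝ² → ℝ} {x : ℝ²} (hf : ContDiffAt ℝ 2 f x)
    (v w : ℝ²) : secondDeriv f x v w = iteratedFDeriv ℝ 2 f x ![w, v] := by
  have hfd : DifferentiableAt ℝ (fderiv ℝ f) x :=
    (hf.fderiv_right (m := 1) (by norm_num)).differentiableAt (by norm_num)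
  rw [iteratedFDeriv_two_apply, secondDeriv,
    show (fun y => fderiv ℝ f y v) = ContinuousLinearMap.apply ℝ ℝ v ∘ fderiv ℝ f from rfl,
    ((ContinuousLinearMap.apply ℝ ℝ v).hasFDerivAt.comp x hfd.hasFDerivAt).fderiv]
  rfl

theorem laplacian_eq_secondDeriv {f : ℝ² → ℝ} {x : ℝ²} (hf : ContDiffAt ℝ 2 f x) :
    Δ f x = secondDeriv f x (EuclideanSpace.single 0 1) (EuclideanSpace.single 0 1) +
      secondDeriv f x (EuclideanSpace.single 1 1) (EuclideanSpace.single 1 1) := by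
  rw [laplacian_eq_iteratedFDeriv_orthonormalBasis f (EuclideanSpace.basisFun (Fin 2) ℝ)]
  dsimp only
  rw [Fin.sum_univ_two, secondDeriv_eq_iteratedFDeriv hf, secondDeriv_eq_iteratedFDeriv hf]
  simp

def cross (d : ℝ) : Set ℝ² := {y | y 1 ∈ Set.Icc 0 d ∨ y 0 ∈ Set.Icc 0 d}

theorem isClosed_cross (d : ℝ) : IsClosed (cross d) :=
  (isClosed_Icc.preimage (by fun_prop)).union (isClosed_Icc.preimage (by fun_prop))

-- For `k d ≤ π / 2` and `0 ≤ y 1 ≤ d`, the second term is at least `cosh (k y₀) / 2` and the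
-- first at least `-cosh (π / 2)`; symmetrically on the other strip.
noncomputable def crossBarrier (k : ℝ) (y : ℝ²) : ℝ :=
  cosh (k * y 1) * cos (k * y 0 - π / 4) + cosh (k * y 0) * cos (k * y 1 - π / 4) + cosh (π / 2)

theorem Complex.re_cos_add_mul_I (a b : ℝ) :
    (cos (a + b * I)).re = Real.cos a * Real.cosh b := by
  simp [cos_add_mul_I, cos_ofReal_re, cosh_ofReal_re]

theorem crossBarrier_eq_re_comp (k : ℝ) :
    crossBarrier k = (fun z : ℂ => (Complex.cos (k * z - π / 4) +
      Complex.cos (k * Complex.I * z + π / 4) + cosh (π / 2)).re) ∘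
        Complex.orthonormalBasisOneI.repr.symm := by
  ext y
  have h₁ : (k : ℂ) * (y 0 + y 1 * Complex.I) - π / 4 =
      ↑(k * y 0 - π / 4) + ↑(k * y 1) * Complex.I := by
    push_cast
    ring
  have h₂ : (k : ℂ) * Complex.I * (y 0 + y 1 * Complex.I) + π / 4 =
      ↑(-(k * y 1 - π / 4)) + ↑(k * y 0) * Complex.I := by
    push_cast
    ring_nf
    simp [Complex.I_sq]
    ring
  simp only [Function.comp_apply, Complex.orthonormalBasisOneI_repr_symm_apply, Complex.add_re,
    h₁, h₂, Complex.re_cos_add_mul_I, Complex.ofReal_re, cos_neg, crossBarrier]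
  ring

theorem harmonicAt_crossBarrier (k : ℝ) (y : ℝ²) : HarmonicAt (crossBarrier k) y := by
  rw [crossBarrier_eq_re_comp]
  refine HarmonicAt.comp_linearIsometryEquiv _ (AnalyticAt.harmonicAt_re ?_)
  fun_prop

theorem EuclideanSpace.norm_le_abs_add_abs (y : ℝ²) : ‖y‖ ≤ |y 0| + |y 1| := by
  rw [EuclideanSpace.norm_eq, Fin.sum_univ_two]
  refine Real.sqrt_le_iff.2 ⟨by positivity, ?_⟩
  simp only [Real.norm_eq_abs]
  nlinarith [abs_nonneg (y 0), abs_nonneg (y 1)]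

theorem Real.abs_le_cosh (t : ℝ) : |t| ≤ cosh t := by
  rw [← cosh_abs]
  exact (self_le_sinh_iff.2 (abs_nonneg t)).trans (sinh_lt_cosh _).le

theorem abs_mul_div_two_le_cosh_mul_cos_add {k d a b : ℝ} (hk : 0 < k) (hkd : k * d ≤ π / 2)
    (hb : b ∈ Set.Icc 0 d) :
    |k * a| / 2 ≤
      cosh (k * b) * cos (k * a - π / 4) + cosh (k * a) * cos (k * b - π / 4) + cosh (π / 2) := by
  have hkb₀ : 0 ≤ k * b := mul_nonneg hk.le hb.1
  have hkb₁ : k * b ≤ π / 2 := (mul_le_mul_of_nonneg_left hb.2 hk.le).trans hkd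
  have hcos : 1 / 2 ≤ cos (k * b - π / 4) := by
    rw [← cos_pi_div_three, ← cos_abs (k * b - π / 4)]
    exact cos_le_cos_of_nonneg_of_le_pi (abs_nonneg _) (by linarith [pi_pos])
      (abs_le.2 ⟨by linarith [pi_pos], by linarith [pi_pos]⟩)
  have hcosh : cosh (k * b) ≤ cosh (π / 2) := by
    rw [cosh_le_cosh, abs_of_nonneg hkb₀, abs_of_nonneg (by positivity)]
    exact hkb₁
  nlinarith [abs_le_cosh (k * a), neg_one_le_cos (k * a - π / 4), cosh_pos (k * b),
    mul_le_mul_of_nonneg_left hcos (cosh_pos (k * a)).le]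

theorem le_crossBarrier_of_mem_cross {k d : ℝ} (hk : 0 < k) (hkd : k * d ≤ π / 2) {y : ℝ²}
    (hy : y ∈ cross d) : max 0 (k * (‖y‖ - d)) / 2 ≤ crossBarrier k y := by
  have hnorm := EuclideanSpace.norm_le_abs_add_abs y
  rcases hy with hy | hy
  · refine le_trans ?_ (abs_mul_div_two_le_cosh_mul_cos_add (a := y 0) hk hkd hy)
    refine div_le_div_of_nonneg_right (max_le (abs_nonneg _) ?_) zero_le_two
    rw [abs_mul, abs_of_pos hk]
    have : |y 1| ≤ d := (abs_of_nonneg hy.1).trans_le hy.2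
    exact mul_le_mul_of_nonneg_left (by linarith) hk.le
  · refine le_trans ?_ ((abs_mul_div_two_le_cosh_mul_cos_add (a := y 1) hk hkd hy).trans_eq
      (by rw [crossBarrier]; ring))
    refine div_le_div_of_nonneg_right (max_le (abs_nonneg _) ?_) zero_le_two
    rw [abs_mul, abs_of_pos hk]
    have : |y 0| ≤ d := (abs_of_nonneg hy.1).trans_le hy.2
    exact mul_le_mul_of_nonneg_left (by linarith) hk.le

theorem tendsto_crossBarrier {k d : ℝ} (hk : 0 < k) (hkd : k * d ≤ π / 2) :
    Tendsto (crossBarrier k) (cobounded ℝ² ⊓ 𝓟 (cross d)) atTop := by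
  have hlim : Tendsto (fun y : ℝ² => k * (‖y‖ - d) / 2) (cobounded ℝ²) atTop :=
    ((tendsto_atTop_add_const_right _ (-d) tendsto_norm_cobounded_atTop).const_mul_atTop
      hk).atTop_div_const two_pos
  refine tendsto_atTop_mono' _ ?_ (hlim.mono_left inf_le_left)
  filter_upwards [mem_inf_of_right (mem_principal_self _)] with y hy
  exact (div_le_div_of_nonneg_right (le_max_right _ _) zero_le_two).trans
    (le_crossBarrier_of_mem_cross hk hkd hy)

theorem stmt_18_general (d : ℝ) (hd : 0 < d)
    (Ω : Set (EuclideanSpace ℝ (Fin 2))) (hΩo : IsOpen Ω)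
    (hlat : Ω ⊆ {x | (0 ≤ x 1 ∧ x 1 ≤ d) ∨ (0 ≤ x 0 ∧ x 0 ≤ d)})
    (u : EuclideanSpace ℝ (Fin 2) → ℝ)
    (hu2 : ContDiffOn ℝ 2 u Ω) (huc : ContinuousOn u (closure Ω))
    (hsub : ∀ x ∈ Ω,
      0 ≤ secondDeriv u x (EuclideanSpace.single 0 1) (EuclideanSpace.single 0 1) +
          secondDeriv u x (EuclideanSpace.single 1 1) (EuclideanSpace.single 1 1))
    (hbd : ∀ x ∈ frontier Ω, u x ≤ 0)
    (hub : ∃ M : ℝ, ∀ x ∈ Ω, u x ≤ M) :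
    ∀ x ∈ Ω, u x ≤ 0 := by
  have hk : 0 < π / (2 * d) := by positivity
  have hkd : π / (2 * d) * d ≤ π / 2 := le_of_eq (by field_simp)
  have hΩ_cross : Ω ⊆ cross d := hlat
  have hclosure : closure Ω ⊆ cross d := closure_minimal hΩ_cross (isClosed_cross d)
  have hΔu : ∀ x ∈ Ω, 0 ≤ Δ u x := fun x hx => by
    rw [laplacian_eq_secondDeriv (hu2.contDiffAt (hΩo.mem_nhds hx))]
    exact hsub x hx
  have hbarrier_fr : ∀ x ∈ frontier Ω, 0 ≤ crossBarrier (π / (2 * d)) x := fun x hx =>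
    le_trans (by positivity)
      (le_crossBarrier_of_mem_cross hk hkd (hclosure (frontier_subset_closure hx)))
  intro x hx
  exact nonpos_of_laplacian_nonneg_of_barrier hΩo huc hu2 hΔu hbd
    (hub.imp fun M hM => Set.forall_mem_image.2 hM)
    (contDiff_iff_contDiffAt.2 fun y => (harmonicAt_crossBarrier _ y).1)
    (fun y _ => (harmonicAt_crossBarrier _ y).2.self_of_nhds.le) hbarrier_fr
    ((tendsto_crossBarrier hk hkd).mono_left (inf_le_inf_left _ (principal_mono.2 hΩ_cross))) hx

theorem stmt_18 (d : ℝ) (hd : 0 < d)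
    (Ω : Set (EuclideanSpace ℝ (Fin 2))) (hΩo : IsOpen Ω) (hΩc : IsConnected Ω)
    (hlat : Ω ⊆ {x | (0 ≤ x 1 ∧ x 1 ≤ d) ∨ (0 ≤ x 0 ∧ x 0 ≤ d)})
    (u : EuclideanSpace ℝ (Fin 2) → ℝ)
    (hu2 : ContDiffOn ℝ 2 u Ω) (huc : ContinuousOn u (closure Ω))
    (hsub : ∀ x ∈ Ω,
      0 ≤ secondDeriv u x (EuclideanSpace.single 0 1) (EuclideanSpace.single 0 1) +
          secondDeriv u x (EuclideanSpace.single 1 1) (EuclideanSpace.single 1 1))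
    (hbd : ∀ x ∈ frontier Ω, u x ≤ 0)
    (hub : ∃ M : ℝ, ∀ x ∈ Ω, u x ≤ M) :
    ∀ x ∈ Ω, u x ≤ 0 :=
  stmt_18_general d hd Ω hΩo hlat u hu2 huc hsub hbd hub
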